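/- Let G act properly by isometries on a proper geodesic Gromov hyperbolic space X and suppose its limit set satisfies |ΛG| ≥ 2. Then for every pair of distinct points (ξ, η) in ΛG × ΛG there exists a sequence of elements g_n ∈ G such that g_n o → ξ and g_n⁻¹ o → η, for some (equivalently, any) basepoint o ∈ X. -/

import Mathlib

/-!
STATEMENT 17. Let `G` act properly by isometries on a proper geodesic Gromov hyperbolic space
`X` and suppose its limit set satisfies `|ΛG| ≥ 2`.  Then for every pair of distinct points
`(ξ, η)` in `ΛG × ΛG` there exists a sequence of elements `gₙ ∈ G` such that `gₙ o → ξ` and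
`gₙ⁻¹ o → η`, for any basepoint `o ∈ X`.
-/

open Metric Filter Set Real

noncomputable section

namespace GromovScaffold

variable {X : Type*} [MetricSpace X]

/-- The Gromov product of `x` and `y` seen from `o`. -/
def gprod (o x y : X) : ℝ := (dist x o + dist y o - dist x y) / 2

/-- `X` is `δ`-hyperbolic in the sense of Gromov (four point condition, which for geodesic
spaces is equivalent, up to changing the constant, to the thin triangles condition). -/
def IsGromovHyperbolic (X : Type*) [MetricSpace X] (δ : ℝ) : Prop :=
  ∀ o x y z : X, min (gprod o x z) (gprod o z y) - δ ≤ gprod o x y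

/-- `f` restricted to `s` is a unit-speed geodesic. -/
def IsGeodesicOn (f : ℝ → X) (s : Set ℝ) : Prop :=
  ∀ u ∈ s, ∀ v ∈ s, dist (f u) (f v) = |u - v|

/-- Every pair of points of `X` is joined by a geodesic segment. -/
def GeodesicSpace (X : Type*) [MetricSpace X] : Prop :=
  ∀ x y : X, ∃ f : ℝ → X, f 0 = x ∧ f (dist x y) = y ∧ IsGeodesicOn f (Icc 0 (dist x y))

/-- A geodesic ray in `X` (parametrised by `[0,∞)`; the values for negative times are
irrelevant). -/
structure GeodesicRay (X : Type*) [MetricSpace X] where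
  toFun : ℝ → X
  geodesic : IsGeodesicOn toFun (Ici 0)

/-- Two rays are asymptotic if they stay at bounded distance from each other. -/
def GeodesicRay.Asymp (r₁ r₂ : GeodesicRay X) : Prop :=
  ∃ C : ℝ, ∀ t ≥ (0 : ℝ), dist (r₁.toFun t) (r₂.toFun t) ≤ C

theorem asymp_equivalence (X : Type*) [MetricSpace X] :
    Equivalence (GeodesicRay.Asymp (X := X)) := by
  constructor
  · exact fun r => ⟨0, fun t _ => by simp⟩
  · rintro r₁ r₂ ⟨C, hC⟩
    exact ⟨C, fun t ht => by rw [dist_comm]; exact hC t ht⟩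
  · rintro r₁ r₂ r₃ ⟨C, hC⟩ ⟨D, hD⟩
    exact ⟨C + D, fun t ht =>
      (dist_triangle _ (r₂.toFun t) _).trans (add_le_add (hC t ht) (hD t ht))⟩

/-- The setoid of asymptotic geodesic rays. -/
def raySetoid (X : Type*) [MetricSpace X] : Setoid (GeodesicRay X) :=
  ⟨GeodesicRay.Asymp, asymp_equivalence X⟩

/-- The Gromov boundary of `X`: asymptotic classes of geodesic rays. -/
def GromovBoundary (X : Type*) [MetricSpace X] := Quotient (raySetoid X)

/-- The boundary point determined by a ray. -/
def GeodesicRay.pt (r : GeodesicRay X) : GromovBoundary X := Quotient.mk (raySetoid X) r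

/-- The image of a geodesic ray under an isometry. -/
def rayMap (g : X ≃ᵢ X) (r : GeodesicRay X) : GeodesicRay X :=
  ⟨fun t => g (r.toFun t), fun u hu v hv => by
    rw [g.dist_eq]; exact r.geodesic u hu v hv⟩

/-- The induced action of an isometry on the Gromov boundary. -/
def bmap (g : X ≃ᵢ X) : GromovBoundary X → GromovBoundary X :=
  Quotient.map (rayMap g) (by
    rintro r₁ r₂ ⟨C, hC⟩
    exact ⟨C, fun t ht => by simpa [rayMap, g.dist_eq] using hC t ht⟩)

/-- A sequence `x : ℕ → X` converges to the boundary point `ξ`: the Gromov products with a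
representing ray go to infinity. -/
def SeqConv (o : X) (x : ℕ → X) (ξ : GromovBoundary X) : Prop :=
  ∃ r : GeodesicRay X, r.pt = ξ ∧
    Tendsto (fun p : ℕ × ℕ => gprod o (x p.1) (r.toFun p.2)) atTop atTop

/-- The limit set of a group of isometries: accumulation points of the orbit `G • o` on the
Gromov boundary. -/
def limitSet (G : Subgroup (X ≃ᵢ X)) (o : X) : Set (GromovBoundary X) :=
  {ξ | ∃ g : ℕ → G, Tendsto (fun n => dist o ((g n : X ≃ᵢ X) o)) atTop atTop ∧
    SeqConv o (fun n => (g n : X ≃ᵢ X) o) ξ}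

/-- `ξ` is a conical limit point of `G`: `ξ ∈ ΛG` and there are `R > 0`, a geodesic ray `σ`
ending at `ξ` and a sequence `gₙ ∈ G` with `gₙ o → ξ` and `d(gₙ o, σ) ≤ R`. -/
def conicalSet (G : Subgroup (X ≃ᵢ X)) (o : X) : Set (GromovBoundary X) :=
  {ξ | ξ ∈ limitSet G o ∧ ∃ R > (0 : ℝ), ∃ σ : GeodesicRay X, σ.pt = ξ ∧ ∃ g : ℕ → G,
    SeqConv o (fun n => (g n : X ≃ᵢ X) o) ξ ∧
    ∀ n, infDist ((g n : X ≃ᵢ X) o) (σ.toFun '' Ici 0) ≤ R}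

/-- The non-conical limit set. -/
def nonconicalSet (G : Subgroup (X ≃ᵢ X)) (o : X) : Set (GromovBoundary X) :=
  limitSet G o \ conicalSet G o

/-- The critical exponent `δ_G = limsup (1/n) log #{g ∈ G : d(o, g o) ≤ n}`. -/
def critExp (G : Subgroup (X ≃ᵢ X)) (o : X) : ℝ :=
  limsup (fun n : ℕ =>
    Real.log (Set.ncard {g : X ≃ᵢ X | g ∈ G ∧ dist o (g o) ≤ n}) / n) atTop

/-- The action of `G` on `X` is properly discontinuous. -/
def ProperAct (G : Subgroup (X ≃ᵢ X)) : Prop :=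
  ∀ (x : X) (R : ℝ), {g : X ≃ᵢ X | g ∈ G ∧ dist x (g x) ≤ R}.Finite

/-- A bi-infinite geodesic in `X`. -/
structure GeodesicLine (X : Type*) [MetricSpace X] where
  toFun : ℝ → X
  geodesic : IsGeodesicOn toFun univ

/-- The positive geodesic ray of a line. -/
def GeodesicLine.posRay (l : GeodesicLine X) : GeodesicRay X :=
  ⟨l.toFun, fun u _ v _ => l.geodesic u trivial v trivial⟩

/-- The negative geodesic ray of a line. -/
def GeodesicLine.negRay (l : GeodesicLine X) : GeodesicRay X :=
  ⟨fun t => l.toFun (-t), fun u _ v _ => by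
    rw [l.geodesic (-u) trivial (-v) trivial, neg_sub_neg, abs_sub_comm]⟩

/-- The line `l` joins the boundary points `ξ` and `η`. -/
def Joins (l : GeodesicLine X) (ξ η : GromovBoundary X) : Prop :=
  l.posRay.pt = ξ ∧ l.negRay.pt = η

/-- The given metric on the Gromov boundary is a visual metric with parameter `ε` and
basepoint `o`: `dist ξ η ≍ exp (-ε d(o, [ξ,η]))` with a uniform multiplicative constant. -/
def IsVisualMetric (o : X) (ε : ℝ) [MetricSpace (GromovBoundary X)] : Prop :=
  ∃ C ≥ (1 : ℝ), ∀ ξ η : GromovBoundary X, ∀ l : GeodesicLine X, Joins l ξ η →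
    dist ξ η ≤ C * Real.exp (-ε * infDist o (range l.toFun)) ∧
    Real.exp (-ε * infDist o (range l.toFun)) / C ≤ dist ξ η

end GromovScaffold

open GromovScaffold

/-!
Write `|z| = d(o, z)`, `(z | z')` for the Gromov product at `o`, `aₙ o → ξ`, `eₘ o → η`, and
`xₙ = aₙ⁻¹ o`, `yₘ = eₘ⁻¹ o`. For `g = aₙ v eₘ⁻¹` both `(g o | aₙ o)` and `(g⁻¹ o | eₘ o)` are
at least `min (|xₙ|, |v yₘ|) - (xₙ | v yₘ) - 2 |v o|`, so such elements do the job unless, for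
every `v ∈ G`, the points `xₙ` and `v yₘ` run together to one boundary point `ζ`. Then `ζ` is
fixed by `G` and is a repelling end of every `aₙ` and `eₘ`: iterating such an element `w` drives
`w⁻ᵏ o` deep towards `ζ` and `wᵏ o` away from it at linear speed. Take `w₁ = aₙ`, `w₂ = eₘ` with
`(w₁ o | w₂ o)` small, which `ξ ≠ η` allows. Choosing `q(p)` with `|w₂^q(p) o| ≈ |w₁ᵖ o|`, the
elements `w₁ᵖ w₂^(-q(p))` are pairwise distinct and move `o` a bounded amount, contradicting
properness.
-/

theorem exists_le_lt_succ {α : Type*} [LinearOrder α] {f : ℕ → α} {L : α} (h0 : f 0 ≤ L)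
    {K : ℕ} (hK : L < f K) : ∃ k, f k ≤ L ∧ L < f (k + 1) := by
  induction K with
  | zero => exact absurd hK (not_lt.2 h0)
  | succ K ih =>
    by_cases hK' : L < f K
    · exact ih hK'
    · exact ⟨K, not_lt.1 hK', hK⟩

namespace GromovScaffold

variable {X : Type*} [MetricSpace X] {δ : ℝ}

section GromovProduct

theorem gprod_comm (o x y : X) : gprod o x y = gprod o y x := by
  rw [gprod, gprod, dist_comm x y]; ring

theorem gprod_le_dist_left (o x y : X) : gprod o x y ≤ dist o x := by
  rw [gprod, dist_comm x o]; linarith [dist_triangle y x o, dist_comm x y, dist_comm x o]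

theorem gprod_le_dist_right (o x y : X) : gprod o x y ≤ dist o y :=
  gprod_comm o x y ▸ gprod_le_dist_left o y x

theorem gprod_le_min (o x y : X) : gprod o x y ≤ min (dist o x) (dist o y) :=
  le_min (gprod_le_dist_left o x y) (gprod_le_dist_right o x y)

theorem gprod_basepoint_left (o x : X) : gprod o o x = 0 := by
  rw [gprod, dist_self, dist_comm]; ring

theorem gprod_basepoint_right (o x : X) : gprod o x o = 0 := by
  rw [gprod_comm, gprod_basepoint_left]

theorem dist_eq_gprod (o x y : X) : dist x y = dist o x + dist o y - 2 * gprod o x y := by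
  rw [gprod, dist_comm x o, dist_comm y o]; ring

theorem gprod_add_gprod_eq_dist (o p x : X) : gprod p x o + gprod o x p = dist o p := by
  rw [gprod, gprod, dist_comm p o]; ring

theorem gprod_change_basepoint (o p x y : X) :
    gprod p x y = dist o p + gprod o x y - gprod o x p - gprod o y p := by
  rw [gprod, gprod, gprod, gprod, dist_comm p o]; ring

theorem gprod_le_gprod_add_dist (o p x y : X) : gprod p x y ≤ gprod o x y + dist o p := by
  rw [gprod, gprod]
  linarith [dist_triangle x o p, dist_triangle y o p, dist_comm o p]

theorem gprod_map (g : X ≃ᵢ X) (o x y : X) : gprod (g o) (g x) (g y) = gprod o x y := by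
  simp only [gprod, g.dist_eq]

end GromovProduct

section Isometries

theorem dist_inv_apply (g : X ≃ᵢ X) (o : X) : dist o (g⁻¹ o) = dist o (g o) := by
  rw [← g.dist_eq, IsometryEquiv.apply_inv_self, dist_comm]

theorem dist_apply_le (g : X ≃ᵢ X) (o x : X) : dist o (g x) ≤ dist o x + dist o (g o) := by
  linarith [dist_triangle o (g o) (g x), g.dist_eq o x]

theorem dist_le_dist_apply_add (g : X ≃ᵢ X) (o x : X) :
    dist o x ≤ dist o (g x) + dist o (g o) := by
  linarith [dist_triangle (g o) o (g x), g.dist_eq o x, dist_comm o (g o)]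

theorem dist_mul_apply (g h : X ≃ᵢ X) (o : X) :
    dist o ((g * h) o) = dist o (g o) + dist o (h o) - 2 * gprod o (g⁻¹ o) (h o) := by
  rw [← dist_inv_apply g, ← dist_eq_gprod, ← g.dist_eq (g⁻¹ o), IsometryEquiv.apply_inv_self,
    IsometryEquiv.mul_apply]

theorem dist_mul_apply_le (g h : X ≃ᵢ X) (o : X) :
    dist o ((g * h) o) ≤ dist o (g o) + dist o (h o) := by
  simpa [IsometryEquiv.mul_apply, add_comm] using dist_apply_le g o (h o)

theorem gprod_apply_apply_self (g : X ≃ᵢ X) (o u : X) :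
    gprod o (g u) (g o) = dist o (g o) - gprod o (g⁻¹ o) u := by
  have h := gprod_map g (g⁻¹ o) u o
  rw [IsometryEquiv.apply_inv_self] at h
  rw [h, ← dist_inv_apply, ← gprod_add_gprod_eq_dist o (g⁻¹ o) u, gprod_comm o u]
  ring

theorem gprod_inv_apply_le (v : X ≃ᵢ X) (o x y : X) :
    gprod o y (v⁻¹ x) ≤ gprod o (v y) x + dist o (v o) := by
  have h := gprod_map v o y (v⁻¹ x)
  rw [IsometryEquiv.apply_inv_self] at h
  rw [← h]
  exact gprod_le_gprod_add_dist o (v o) (v y) x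

end Isometries

section Hyperbolic

theorem IsGromovHyperbolic.nonneg (hX : IsGromovHyperbolic X δ) (o : X) : 0 ≤ δ := by
  simpa [gprod_basepoint_left] using hX o o o o

theorem IsGromovHyperbolic.sub_le_gprod (hX : IsGromovHyperbolic X δ) {o x y z : X} {A : ℝ}
    (hxz : A ≤ gprod o x z) (hzy : A ≤ gprod o z y) : A - δ ≤ gprod o x y :=
  (sub_le_sub_right (le_min hxz hzy) δ).trans (hX o x y z)

theorem IsGromovHyperbolic.gprod_le (hX : IsGromovHyperbolic X δ) {o x y z : X} {T β : ℝ}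
    (hxz : T ≤ gprod o x z) (hyz : gprod o y z ≤ β) (hβ : β + δ < T) :
    gprod o x y ≤ β + δ := by
  by_contra! h
  have hmin : β + δ < min (gprod o y x) (gprod o x z) :=
    lt_min (gprod_comm o x y ▸ h) (hβ.trans_le hxz)
  linarith [hX o y z x]

theorem IsGromovHyperbolic.gprod_le_of_eventually (hX : IsGromovHyperbolic X δ) {o p q : X}
    {y : ℕ → X} {T β : ℝ} (hp : ∀ᶠ m in atTop, T ≤ gprod o p (y m))
    (hq : ∀ᶠ m in atTop, gprod o (y m) q ≤ β) (hβ : β + δ < T) : gprod o p q ≤ β + δ := by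
  obtain ⟨m, hpm, hqm⟩ := (hp.and hq).exists
  exact hX.gprod_le hpm (gprod_comm o q (y m) ▸ hqm) hβ

end Hyperbolic

section Rays

theorem GeodesicRay.dist_zero (r : GeodesicRay X) {t : ℝ} (ht : 0 ≤ t) :
    dist (r.toFun t) (r.toFun 0) = t := by
  rw [r.geodesic t ht 0 self_mem_Ici, sub_zero, abs_of_nonneg ht]

theorem GeodesicRay.dist_le (o : X) (r : GeodesicRay X) {t : ℝ} (ht : 0 ≤ t) :
    dist o (r.toFun t) ≤ t + dist o (r.toFun 0) := by
  linarith [dist_triangle o (r.toFun 0) (r.toFun t), dist_comm (r.toFun t) (r.toFun 0),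
    r.dist_zero ht]

theorem GeodesicRay.sub_le_gprod (o : X) (r : GeodesicRay X) {t T : ℝ} (ht : 0 ≤ t)
    (htT : t ≤ T) : t - dist o (r.toFun 0) ≤ gprod o (r.toFun t) (r.toFun T) := by
  have htT' := r.geodesic t ht T (ht.trans htT)
  rw [abs_of_nonpos (by linarith)] at htT'
  rw [gprod]
  linarith [dist_triangle (r.toFun T) o (r.toFun 0), dist_triangle (r.toFun t) o (r.toFun 0),
    r.dist_zero ht, r.dist_zero (ht.trans htT)]

theorem GeodesicRay.asymp_of_tendsto_gprod (hX : IsGromovHyperbolic X δ) (o : X)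
    {r s : GeodesicRay X}
    (h : Tendsto (fun p : ℕ × ℕ => gprod o (r.toFun p.1) (s.toFun p.2)) atTop atTop) :
    r.Asymp s := by
  set cr := dist o (r.toFun 0)
  set cs := dist o (s.toFun 0)
  have hδ := hX.nonneg o
  have hcr : 0 ≤ cr := dist_nonneg
  have hcs : 0 ≤ cs := dist_nonneg
  refine ⟨3 * (cr + cs) + 4 * δ, fun t ht => ?_⟩
  have hnat : Tendsto (fun n : ℕ => (n : ℝ)) atTop atTop := tendsto_natCast_atTop_atTop
  rw [← prod_atTop_atTop_eq] at h
  obtain ⟨⟨n, m⟩, hnm, hn, hm⟩ := ((h.eventually_ge_atTop t).and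
    (((hnat.comp tendsto_fst).eventually_ge_atTop t).and
      ((hnat.comp tendsto_snd).eventually_ge_atTop t))).exists
  simp only [Function.comp_apply] at hnm hn hm
  have hr : t - cr - cs ≤ gprod o (r.toFun t) (r.toFun n) := by
    linarith [r.sub_le_gprod o ht hn]
  have hs : t - cr - cs ≤ gprod o (s.toFun m) (s.toFun t) := by
    rw [gprod_comm]
    linarith [s.sub_le_gprod o ht hm]
  have hrs : t - cr - cs - δ ≤ gprod o (r.toFun t) (s.toFun m) :=
    hX.sub_le_gprod hr (by linarith)
  have hrs' := hX.sub_le_gprod hrs (by linarith)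
  rw [dist_eq_gprod o]
  linarith [r.dist_le o ht, s.dist_le o ht]

theorem SeqConv.of_tendsto_gprod (hX : IsGromovHyperbolic X δ) {o : X} {x z : ℕ → X}
    {ξ : GromovBoundary X} (hx : SeqConv o x ξ) {φ : ℕ → ℕ} (hφ : Tendsto φ atTop atTop)
    (hz : Tendsto (fun k => gprod o (z k) (x (φ k))) atTop atTop) : SeqConv o z ξ := by
  obtain ⟨r, hr, hxr⟩ := hx
  refine ⟨r, hr, tendsto_atTop.2 fun b => ?_⟩
  rw [← prod_atTop_atTop_eq]
  filter_upwards [(hz.comp tendsto_fst).eventually_ge_atTop (b + δ),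
    (hxr.comp (hφ.prod_map_prod_atTop tendsto_id)).eventually_ge_atTop (b + δ)] with p h1 h2
  dsimp only [Function.comp, Prod.map, id] at h1 h2
  linarith [hX.sub_le_gprod h1 h2]

theorem SeqConv.exists_eventually_gprod_le (hX : IsGromovHyperbolic X δ) {o : X}
    {x y : ℕ → X} {ξ η : GromovBoundary X} (hx : SeqConv o x ξ) (hy : SeqConv o y η)
    (hne : ξ ≠ η) : ∃ C, ∀ᶠ p : ℕ × ℕ in atTop, gprod o (x p.1) (y p.2) ≤ C := by
  obtain ⟨r, rfl, hxr⟩ := hx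
  obtain ⟨s, rfl, hys⟩ := hy
  by_contra! h
  refine hne (Quotient.sound (GeodesicRay.asymp_of_tendsto_gprod hX o
    (tendsto_atTop.2 fun b => ?_)))
  have hδ := hX.nonneg o
  have hfar : ∀ᶠ p : ℕ × ℕ in atTop,
      (∀ᶠ t : ℕ in atTop, b + 2 * δ ≤ gprod o (x p.1) (r.toFun t)) ∧
        ∀ᶠ u : ℕ in atTop, b + 2 * δ ≤ gprod o (y p.2) (s.toFun u) := by
    rw [← prod_atTop_atTop_eq]
    exact (eventually_atTop_curry (hxr.eventually_ge_atTop _)).prod_mk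
      (eventually_atTop_curry (hys.eventually_ge_atTop _))
  obtain ⟨⟨n, m⟩, hnm, hn, hm⟩ := ((h (b + 2 * δ)).and_eventually hfar).exists
  rw [← prod_atTop_atTop_eq]
  filter_upwards [hn.prod_mk hm] with ⟨t, u⟩ ⟨ht, hu⟩
  have hxs : b + δ ≤ gprod o (x n) (s.toFun u) := by
    linarith [hX.sub_le_gprod hnm.le hu]
  have hrx : b + δ ≤ gprod o (r.toFun t) (x n) := by
    rw [gprod_comm]; linarith
  linarith [hX.sub_le_gprod hrx hxs]

end Rays

/-- `x n` and `y m` eventually lie, up to a bounded error, on a common geodesic issuing from `o`;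
in particular both sequences converge to the same boundary point. -/
def Aligned (o : X) (x y : ℕ → X) : Prop :=
  ∃ C, ∀ᶠ p : ℕ × ℕ in atTop,
    min (dist o (x p.1)) (dist o (y p.2)) - C ≤ gprod o (x p.1) (y p.2)

section Aligned

variable {o : X} {x y z : ℕ → X}

theorem Aligned.symm (h : Aligned o x y) : Aligned o y x := by
  obtain ⟨C, hC⟩ := h
  obtain ⟨K, hK⟩ := eventually_atTop_prod_self'.1 hC
  refine ⟨C, eventually_atTop_prod_self'.2 ⟨K, fun m hm n hn => ?_⟩⟩
  rw [min_comm, gprod_comm]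
  exact hK n hn m hm

theorem Aligned.trans (hX : IsGromovHyperbolic X δ) (hxy : Aligned o x y) (hyz : Aligned o y z)
    (hy : Tendsto (fun m => dist o (y m)) atTop atTop) : Aligned o x z := by
  obtain ⟨C₁, h₁⟩ := hxy
  obtain ⟨C₂, h₂⟩ := hyz
  obtain ⟨K₁, hK₁⟩ := eventually_atTop_prod_self'.1 h₁
  obtain ⟨K₂, hK₂⟩ := eventually_atTop_prod_self'.1 h₂
  refine ⟨C₁ + C₂ + δ, eventually_atTop_prod_self'.2 ⟨max K₁ K₂, fun n hn p hp => ?_⟩⟩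
  dsimp only at hK₁ hK₂ ⊢
  obtain ⟨m, hm, hmK⟩ :=
    ((hy.eventually_ge_atTop (dist o (x n))).and (eventually_ge_atTop (max K₁ K₂))).exists
  have hxy := hK₁ n (le_of_max_le_left hn) m (le_of_max_le_left hmK)
  have hyz := hK₂ m (le_of_max_le_right hmK) p (le_of_max_le_right hp)
  rw [min_eq_left hm] at hxy
  have hmin : min (dist o (x n)) (dist o (z p)) ≤ min (dist o (y m)) (dist o (z p)) :=
    min_le_min hm le_rfl
  have hC₁ : 0 ≤ C₁ := by linarith [gprod_le_dist_left o (x n) (y m)]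
  have hC₂ : 0 ≤ C₂ := by linarith [gprod_le_min o (y m) (z p)]
  have := hX.sub_le_gprod (x := x n) (z := y m) (y := z p)
    (A := min (dist o (x n)) (dist o (z p)) - C₁ - C₂)
    (by linarith [min_le_left (dist o (x n)) (dist o (z p))]) (by linarith)
  linarith

theorem Aligned.exists_eventually_le (h : Aligned o x y)
    (hy : Tendsto (fun m => dist o (y m)) atTop atTop) :
    ∃ C, ∀ᶠ n in atTop, ∀ᶠ m in atTop, dist o (x n) - C ≤ gprod o (x n) (y m) := by
  obtain ⟨C, hC⟩ := h
  refine ⟨C, ?_⟩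
  filter_upwards [eventually_atTop_curry hC] with n hn
  filter_upwards [hn, hy.eventually_ge_atTop (dist o (x n))] with m h1 h2
  rwa [min_eq_left h2] at h1

end Aligned

/-- `y` runs to a boundary point fixed by `w`, and `w⁻¹ o` lies within `B` of a geodesic from `o`
towards it: `y` marks the repelling end of `w`. -/
structure IsRepellingEnd (o : X) (B : ℝ) (w : X ≃ᵢ X) (y : ℕ → X) : Prop where
  le_gprod : ∀ᶠ m in atTop, dist o (w o) - B ≤ gprod o (w⁻¹ o) (y m)
  aligned_apply : Aligned o (fun m => w (y m)) y
  aligned_inv_apply : Aligned o (fun m => w⁻¹ (y m)) y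

namespace IsRepellingEnd

variable {o : X} {B : ℝ} {w w₁ w₂ : X ≃ᵢ X} {y : ℕ → X}

theorem nonneg (hw : IsRepellingEnd o B w y) : 0 ≤ B := by
  obtain ⟨m, hm⟩ := hw.le_gprod.exists
  linarith [gprod_le_dist_left o (w⁻¹ o) (y m), dist_inv_apply w o]

theorem eventually_gprod_le (hX : IsGromovHyperbolic X δ)
    (hy : Tendsto (fun m => dist o (y m)) atTop atTop) (hw : IsRepellingEnd o B w y) :
    ∀ᶠ m in atTop, gprod o (y m) (w o) ≤ B + δ := by
  obtain ⟨C, hC⟩ := hw.aligned_apply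
  obtain ⟨μ, hμ, hCμ, hyμ⟩ := (hw.le_gprod.and ((eventually_atTop_curry hC).and
    (hy.eventually_ge_atTop (B + δ + 1 + C + dist o (w o))))).exists
  have hwμ : gprod o (w o) (w (y μ)) ≤ B := by
    rw [gprod_comm, gprod_apply_apply_self]; linarith
  filter_upwards [hCμ, hy.eventually_ge_atTop (B + δ + 1 + C)] with m h1 h2
  have hmin : B + δ + 1 + C ≤ min (dist o (w (y μ))) (dist o (y m)) :=
    le_min (by linarith [dist_le_dist_apply_add w o (y μ)]) h2
  exact hX.gprod_le (T := B + δ + 1) (by rw [gprod_comm]; linarith) hwμ (by linarith)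

theorem eventually_le_gprod_inv_pow (hX : IsGromovHyperbolic X δ)
    (hy : Tendsto (fun m => dist o (y m)) atTop atTop) (hw : IsRepellingEnd o B w y)
    (hl : 2 * (B + 2 * δ) < dist o (w o)) (k : ℕ) :
    ∀ᶠ m in atTop, (k + 1) * (dist o (w o) - 2 * (B + 2 * δ)) + B + 4 * δ ≤
      gprod o ((w ^ (k + 1))⁻¹ o) (y m) := by
  have hδ := hX.nonneg o
  have hB := hw.nonneg
  set s := dist o (w o) - 2 * (B + 2 * δ)
  induction k with
  | zero =>
    filter_upwards [hw.le_gprod] with m hm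
    rw [zero_add, pow_one]
    linarith
  | succ k ih =>
    set q := ((k : ℝ) + 1) * s + B + 4 * δ
    have hq : B + δ + δ < q := by
      have : 0 < ((k : ℝ) + 1) * s := mul_pos (by positivity) (by linarith)
      linarith
    have htr := hX.gprod_le_of_eventually ih (hw.eventually_gprod_le hX hy) hq
    obtain ⟨C, hC⟩ := hw.aligned_inv_apply
    obtain ⟨m, hm, hm', hCm, hym⟩ := (ih.and ((hw.eventually_gprod_le hX hy).and
      ((eventually_atTop_curry hC).and
        (hy.eventually_ge_atTop (q + 2 * dist o (w o) + C))))).exists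
    have hstep : q + s + δ ≤ gprod o ((w ^ (k + 1 + 1))⁻¹ o) (w⁻¹ (y m)) := by
      have h := gprod_map w⁻¹ (w o) ((w ^ (k + 1))⁻¹ o) (y m)
      rw [IsometryEquiv.inv_apply_self] at h
      rw [pow_succ w (k + 1), mul_inv_rev, IsometryEquiv.mul_apply, h, gprod_change_basepoint o]
      linarith
    filter_upwards [hCm, hy.eventually_ge_atTop (q + dist o (w o) + C)] with m' h1 h2
    have hmin : q + dist o (w o) + C ≤ min (dist o (w⁻¹ (y m))) (dist o (y m')) :=
      le_min (by linarith [dist_le_dist_apply_add w⁻¹ o (y m), dist_inv_apply w o]) h2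
    have := hX.sub_le_gprod hstep (y := y m') (by linarith)
    push_cast
    linarith

theorem gprod_inv_pow_le (hX : IsGromovHyperbolic X δ)
    (hy : Tendsto (fun m => dist o (y m)) atTop atTop) (hw : IsRepellingEnd o B w y)
    (hl : 2 * (B + 2 * δ) < dist o (w o)) {q : X} {β : ℝ}
    (hq : ∀ᶠ m in atTop, gprod o (y m) q ≤ β) (hβ0 : 0 ≤ β + δ) (hβ : β ≤ B + 2 * δ) (k : ℕ) :
    gprod o ((w ^ k)⁻¹ o) q ≤ β + δ := by
  cases k with
  | zero => simpa [gprod_basepoint_left] using hβ0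
  | succ k =>
    refine hX.gprod_le_of_eventually (hw.eventually_le_gprod_inv_pow hX hy hl k) hq ?_
    have : 0 < ((k : ℝ) + 1) * (dist o (w o) - 2 * (B + 2 * δ)) :=
      mul_pos (by positivity) (by linarith)
    linarith [hX.nonneg o]

theorem dist_pow_succ_ge (hX : IsGromovHyperbolic X δ)
    (hy : Tendsto (fun m => dist o (y m)) atTop atTop) (hw : IsRepellingEnd o B w y)
    (hl : 2 * (B + 2 * δ) < dist o (w o)) (k : ℕ) :
    dist o ((w ^ k) o) + (dist o (w o) - 2 * (B + 2 * δ)) ≤ dist o ((w ^ (k + 1)) o) := by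
  have h := hw.gprod_inv_pow_le hX hy hl (hw.eventually_gprod_le hX hy)
    (by linarith [hw.nonneg, hX.nonneg o]) (by linarith [hX.nonneg o]) k
  rw [pow_succ, dist_mul_apply]
  linarith

theorem mul_le_dist_pow (hX : IsGromovHyperbolic X δ)
    (hy : Tendsto (fun m => dist o (y m)) atTop atTop) (hw : IsRepellingEnd o B w y)
    (hl : 2 * (B + 2 * δ) < dist o (w o)) (k : ℕ) :
    k * (dist o (w o) - 2 * (B + 2 * δ)) ≤ dist o ((w ^ k) o) := by
  induction k with
  | zero => simp
  | succ k ih =>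
    push_cast
    linarith [hw.dist_pow_succ_ge hX hy hl k]

theorem le_gprod_pow_apply (hX : IsGromovHyperbolic X δ)
    (hy : Tendsto (fun m => dist o (y m)) atTop atTop) (hw : IsRepellingEnd o B w y)
    (hl : 2 * (B + 2 * δ) < dist o (w o)) (k : ℕ) :
    dist o (w o) - (B + 2 * δ) ≤ gprod o ((w ^ (k + 1)) o) (w o) := by
  have h := hw.dist_pow_succ_ge hX hy hl k
  rw [pow_succ', dist_mul_apply] at h
  rw [pow_succ', IsometryEquiv.mul_apply, gprod_apply_apply_self]
  linarith

theorem eventually_gprod_pow_le (hX : IsGromovHyperbolic X δ)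
    (hy : Tendsto (fun m => dist o (y m)) atTop atTop) (hw : IsRepellingEnd o B w y)
    (hl : 2 * (B + 2 * δ) < dist o (w o)) (k : ℕ) :
    ∀ᶠ m in atTop, gprod o (y m) ((w ^ k) o) ≤ B + 2 * δ := by
  cases k with
  | zero =>
    refine Eventually.of_forall fun m => ?_
    rw [pow_zero, IsometryEquiv.coe_one, id, gprod_basepoint_right]
    linarith [hw.nonneg, hX.nonneg o]
  | succ k =>
    filter_upwards [hw.eventually_gprod_le hX hy] with m hm
    rw [gprod_comm]
    linarith [hX.gprod_le (hw.le_gprod_pow_apply hX hy hl k) hm (by linarith)]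

theorem dist_add_dist_le_dist_pow_add (hX : IsGromovHyperbolic X δ)
    (hy : Tendsto (fun m => dist o (y m)) atTop atTop) (hw : IsRepellingEnd o B w y)
    (hl : 2 * (B + 2 * δ) < dist o (w o)) (a b : ℕ) :
    dist o ((w ^ a) o) + dist o ((w ^ b) o) - 2 * (B + 3 * δ) ≤ dist o ((w ^ (a + b)) o) := by
  have h := hw.gprod_inv_pow_le hX hy hl (hw.eventually_gprod_pow_le hX hy hl b)
    (by linarith [hw.nonneg, hX.nonneg o]) le_rfl a
  rw [pow_add, dist_mul_apply]
  linarith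

theorem le_gprod_inv_pow_inv_pow (hX : IsGromovHyperbolic X δ)
    (hy : Tendsto (fun m => dist o (y m)) atTop atTop) (hw : IsRepellingEnd o B w y)
    (hl : 2 * (B + 2 * δ) < dist o (w o)) (k j : ℕ) :
    dist o ((w ^ k) o) - (B + 3 * δ) ≤ gprod o ((w ^ k)⁻¹ o) ((w ^ (k + j))⁻¹ o) := by
  have hd : dist ((w ^ k)⁻¹ o) ((w ^ (k + j))⁻¹ o) = dist o ((w ^ j) o) := by
    rw [add_comm, pow_add, mul_inv_rev, IsometryEquiv.mul_apply, (w ^ k)⁻¹.dist_eq,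
      dist_inv_apply]
  have h := dist_eq_gprod o ((w ^ k)⁻¹ o) ((w ^ (k + j))⁻¹ o)
  rw [hd, dist_inv_apply, dist_inv_apply] at h
  linarith [hw.dist_add_dist_le_dist_pow_add hX hy hl k j]

theorem eventually_dist_sub_le_gprod (hX : IsGromovHyperbolic X δ)
    (hy : Tendsto (fun m => dist o (y m)) atTop atTop) (hw : IsRepellingEnd o B w y)
    (hl : 2 * (B + 2 * δ) < dist o (w o)) (k : ℕ) :
    ∀ᶠ m in atTop, dist o ((w ^ k) o) - (B + 4 * δ) ≤ gprod o ((w ^ k)⁻¹ o) (y m) := by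
  have hs : 0 < dist o (w o) - 2 * (B + 2 * δ) := by linarith
  obtain ⟨N, hN⟩ := exists_nat_ge (dist o ((w ^ k) o) / (dist o (w o) - 2 * (B + 2 * δ)))
  rw [div_le_iff₀ hs] at hN
  filter_upwards [hw.eventually_le_gprod_inv_pow hX hy hl (k + N)] with m hm
  have hkN := hw.le_gprod_inv_pow_inv_pow hX hy hl k (N + 1)
  rw [← add_assoc] at hkN
  push_cast at hm
  have hNk : (N : ℝ) * (dist o (w o) - 2 * (B + 2 * δ)) ≤
      ((k : ℝ) + N + 1) * (dist o (w o) - 2 * (B + 2 * δ)) :=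
    mul_le_mul_of_nonneg_right (by linarith [(k.cast_nonneg : (0 : ℝ) ≤ k)]) hs.le
  have := hX.sub_le_gprod hkN (y := y m) (A := dist o ((w ^ k) o) - (B + 3 * δ))
    (by linarith [hw.nonneg, hX.nonneg o])
  linarith

theorem pow_ne_zpow (hX : IsGromovHyperbolic X δ)
    (hy : Tendsto (fun m => dist o (y m)) atTop atTop)
    (hw₁ : IsRepellingEnd o B w₁ y) (hw₂ : IsRepellingEnd o B w₂ y)
    (hl₁ : 2 * (B + 2 * δ) < dist o (w₁ o)) (hl₂ : 2 * (B + 2 * δ) < dist o (w₂ o))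
    (hcross : gprod o (w₁ o) (w₂ o) + B + 3 * δ < min (dist o (w₁ o)) (dist o (w₂ o)))
    (k : ℕ) (j : ℤ) : w₁ ^ (k + 1) ≠ w₂ ^ j := by
  intro h
  have ho : (w₁ ^ (k + 1)) o = (w₂ ^ j) o := by rw [h]
  rcases j with (_ | n) | n
  · have := hw₁.mul_le_dist_pow hX hy hl₁ (k + 1)
    rw [ho, Int.ofNat_eq_natCast, Nat.cast_zero, zpow_zero, IsometryEquiv.coe_one, id,
      dist_self] at this
    have : 0 < ((k + 1 : ℕ) : ℝ) * (dist o (w₁ o) - 2 * (B + 2 * δ)) :=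
      mul_pos (by positivity) (by linarith)
    linarith
  · rw [Int.ofNat_eq_natCast, zpow_natCast] at ho
    have h₁ := hw₁.le_gprod_pow_apply hX hy hl₁ k
    have h₂ := hw₂.le_gprod_pow_apply hX hy hl₂ n
    rw [ho, gprod_comm] at h₁
    have := hX.sub_le_gprod (x := w₁ o) (z := (w₂ ^ (n + 1)) o) (y := w₂ o)
      (A := min (dist o (w₁ o)) (dist o (w₂ o)) - (B + 2 * δ))
      (by linarith [min_le_left (dist o (w₁ o)) (dist o (w₂ o))])
      (by linarith [min_le_right (dist o (w₁ o)) (dist o (w₂ o))])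
    linarith
  · rw [zpow_negSucc] at ho
    obtain ⟨m, hm₁, hm₂⟩ := ((hw₂.eventually_le_gprod_inv_pow hX hy hl₂ n).and
      (hw₁.eventually_gprod_pow_le hX hy hl₁ (k + 1))).exists
    rw [← ho, gprod_comm] at hm₁
    have : 0 < ((n : ℝ) + 1) * (dist o (w₂ o) - 2 * (B + 2 * δ)) :=
      mul_pos (by positivity) (by linarith)
    linarith [hX.nonneg o]

theorem dist_pow_mul_inv_pow_le (hX : IsGromovHyperbolic X δ)
    (hy : Tendsto (fun m => dist o (y m)) atTop atTop)
    (hw₁ : IsRepellingEnd o B w₁ y) (hw₂ : IsRepellingEnd o B w₂ y)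
    (hl₁ : 2 * (B + 2 * δ) < dist o (w₁ o)) (hl₂ : 2 * (B + 2 * δ) < dist o (w₂ o))
    {p q : ℕ} (hqp : dist o ((w₂ ^ q) o) ≤ dist o ((w₁ ^ p) o)) :
    dist o ((w₁ ^ p * (w₂ ^ q)⁻¹) o) ≤
      dist o ((w₁ ^ p) o) - dist o ((w₂ ^ q) o) + 2 * (B + 5 * δ) := by
  obtain ⟨m, hm₁, hm₂⟩ := ((hw₁.eventually_dist_sub_le_gprod hX hy hl₁ p).and
    (hw₂.eventually_dist_sub_le_gprod hX hy hl₂ q)).exists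
  rw [gprod_comm] at hm₂
  have := hX.sub_le_gprod (A := dist o ((w₂ ^ q) o) - (B + 4 * δ)) (by linarith) hm₂
  rw [dist_mul_apply, dist_inv_apply]
  linarith

end IsRepellingEnd

theorem not_properAct_of_isRepellingEnd (hX : IsGromovHyperbolic X δ)
    {G : Subgroup (X ≃ᵢ X)} {o : X} {B : ℝ} {w₁ w₂ : X ≃ᵢ X} (h₁G : w₁ ∈ G) (h₂G : w₂ ∈ G)
    {y : ℕ → X} (hy : Tendsto (fun m => dist o (y m)) atTop atTop)
    (hw₁ : IsRepellingEnd o B w₁ y) (hw₂ : IsRepellingEnd o B w₂ y)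
    (hl₁ : 2 * (B + 2 * δ) < dist o (w₁ o)) (hl₂ : 2 * (B + 2 * δ) < dist o (w₂ o))
    (hcross : gprod o (w₁ o) (w₂ o) + B + 3 * δ < min (dist o (w₁ o)) (dist o (w₂ o))) :
    ¬ProperAct G := by
  intro hG
  have hQ : ∀ p : ℕ, ∃ q, dist o ((w₂ ^ q) o) ≤ dist o ((w₁ ^ p) o) ∧
      dist o ((w₁ ^ p) o) < dist o ((w₂ ^ (q + 1)) o) := by
    intro p
    have hs : 0 < dist o (w₂ o) - 2 * (B + 2 * δ) := by linarith
    obtain ⟨K, hK⟩ := exists_nat_gt (dist o ((w₁ ^ p) o) / (dist o (w₂ o) - 2 * (B + 2 * δ)))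
    rw [div_lt_iff₀ hs] at hK
    exact exists_le_lt_succ (by simp) (hK.trans_le (hw₂.mul_le_dist_pow hX hy hl₂ K))
  choose Q hQ₁ hQ₂ using hQ
  set W : ℕ → X ≃ᵢ X := fun p => w₁ ^ p * (w₂ ^ Q p)⁻¹
  have hW : ∀ p, W p ∈ {g | g ∈ G ∧ dist o (g o) ≤ dist o (w₂ o) + 2 * (B + 5 * δ)} := by
    intro p
    refine ⟨G.mul_mem (G.pow_mem h₁G p) (G.inv_mem (G.pow_mem h₂G _)), ?_⟩
    have := hw₁.dist_pow_mul_inv_pow_le hX hy hw₂ hl₁ hl₂ (hQ₁ p)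
    have := dist_mul_apply_le (w₂ ^ Q p) w₂ o
    rw [← pow_succ] at this
    linarith [hQ₂ p]
  have hne : ∀ p p', p < p' → W p ≠ W p' := by
    intro p p' hpp' h
    apply hw₁.pow_ne_zpow hX hy hw₂ hl₁ hl₂ hcross (p' - p - 1) ((Q p' : ℤ) - Q p)
    calc w₁ ^ (p' - p - 1 + 1) = (w₁ ^ p)⁻¹ * w₁ ^ p' := by
          rw [eq_inv_mul_iff_mul_eq, ← pow_add]; congr 1; omega
      _ = (w₂ ^ Q p)⁻¹ * w₂ ^ Q p' := by
          rw [inv_mul_eq_iff_eq_mul, ← mul_assoc, show w₁ ^ p * (w₂ ^ Q p)⁻¹ = W p from rfl, h,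
            inv_mul_cancel_right]
      _ = w₂ ^ ((Q p' : ℤ) - Q p) := by
          rw [sub_eq_neg_add, zpow_add, zpow_neg, zpow_natCast, zpow_natCast]
  have hinj : Function.Injective W := by
    intro p p' h
    rcases lt_trichotomy p p' with hlt | rfl | hgt
    exacts [(hne _ _ hlt h).elim, rfl, (hne _ _ hgt h.symm).elim]
  exact Set.infinite_of_injective_forall_mem hinj hW (hG o _)

theorem sub_gprod_le_gprod_mul_mul_inv_apply (a v e : X ≃ᵢ X) (o : X) :
    min (dist o (a⁻¹ o)) (dist o (v (e⁻¹ o))) - gprod o (a⁻¹ o) (v (e⁻¹ o)) ≤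
      gprod o ((a * v * e⁻¹) o) (a o) := by
  rw [IsometryEquiv.mul_apply, IsometryEquiv.mul_apply, gprod_apply_apply_self]
  linarith [min_le_left (dist o (a⁻¹ o)) (dist o (v (e⁻¹ o))), dist_inv_apply a o]

theorem sub_gprod_le_gprod_inv_mul_mul_inv_apply (a v e : X ≃ᵢ X) (o : X) :
    min (dist o (a⁻¹ o)) (dist o (v (e⁻¹ o))) - gprod o (a⁻¹ o) (v (e⁻¹ o)) -
        2 * dist o (v o) ≤ gprod o ((a * v * e⁻¹)⁻¹ o) (e o) := by
  simp only [mul_inv_rev, inv_inv, IsometryEquiv.mul_apply]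
  rw [gprod_apply_apply_self, ← dist_inv_apply e]
  linarith [min_le_right (dist o (a⁻¹ o)) (dist o (v (e⁻¹ o))), gprod_inv_apply_le v o (a⁻¹ o)
    (e⁻¹ o), gprod_comm o (v (e⁻¹ o)) (a⁻¹ o), dist_apply_le v o (e⁻¹ o), dist_nonneg (x := o)
    (y := v o)]

theorem exists_seq_of_not_aligned (hX : IsGromovHyperbolic X δ) {G : Subgroup (X ≃ᵢ X)}
    {o : X} {a e : ℕ → G} {v : G} {ξ η : GromovBoundary X}
    (hξ : SeqConv o (fun n => (a n : X ≃ᵢ X) o) ξ) (hη : SeqConv o (fun m => (e m : X ≃ᵢ X) o) η)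
    (hv : ¬Aligned o (fun n => (a n : X ≃ᵢ X)⁻¹ o)
      (fun m => (v : X ≃ᵢ X) ((e m : X ≃ᵢ X)⁻¹ o))) :
    ∃ g : ℕ → G, SeqConv o (fun k => (g k : X ≃ᵢ X) o) ξ ∧
      SeqConv o (fun k => (g k : X ≃ᵢ X)⁻¹ o) η := by
  simp only [Aligned, not_exists, not_eventually, not_le] at hv
  have hbad : ∀ k : ℕ, ∃ p : ℕ × ℕ, k ≤ p.1 ∧ k ≤ p.2 ∧
      k + 2 * dist o ((v : X ≃ᵢ X) o) ≤
        min (dist o ((a p.1 : X ≃ᵢ X)⁻¹ o)) (dist o ((v : X ≃ᵢ X) ((e p.2 : X ≃ᵢ X)⁻¹ o))) -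
          gprod o ((a p.1 : X ≃ᵢ X)⁻¹ o) ((v : X ≃ᵢ X) ((e p.2 : X ≃ᵢ X)⁻¹ o)) := by
    intro k
    obtain ⟨p, hp, hk⟩ := ((hv (k + 2 * dist o ((v : X ≃ᵢ X) o))).and_eventually
      (eventually_ge_atTop (k, k))).exists
    exact ⟨p, hk.1, hk.2, by linarith⟩
  choose p hp₁ hp₂ hp using hbad
  refine ⟨fun k => a (p k).1 * v * (e (p k).2)⁻¹,
    hξ.of_tendsto_gprod hX (tendsto_atTop_mono hp₁ tendsto_id) ?_,
    hη.of_tendsto_gprod hX (tendsto_atTop_mono hp₂ tendsto_id) ?_⟩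
  · refine tendsto_atTop_mono (fun k => ?_) tendsto_natCast_atTop_atTop
    simp only [Subgroup.coe_mul, Subgroup.coe_inv]
    linarith [sub_gprod_le_gprod_mul_mul_inv_apply (a (p k).1) v (e (p k).2) o, hp k,
      dist_nonneg (x := o) (y := (v : X ≃ᵢ X) o)]
  · refine tendsto_atTop_mono (fun k => ?_) tendsto_natCast_atTop_atTop
    simp only [Subgroup.coe_mul, Subgroup.coe_inv]
    linarith [sub_gprod_le_gprod_inv_mul_mul_inv_apply (a (p k).1) v (e (p k).2) o, hp k]

theorem not_properAct_of_forall_aligned (hX : IsGromovHyperbolic X δ)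
    {G : Subgroup (X ≃ᵢ X)} {o : X} {a e : ℕ → G}
    (ha : Tendsto (fun n => dist o ((a n : X ≃ᵢ X) o)) atTop atTop)
    (he : Tendsto (fun m => dist o ((e m : X ≃ᵢ X) o)) atTop atTop)
    (hcross : ∃ C, ∀ᶠ p : ℕ × ℕ in atTop,
      gprod o ((a p.1 : X ≃ᵢ X) o) ((e p.2 : X ≃ᵢ X) o) ≤ C)
    (hal : ∀ v : G, Aligned o (fun n => (a n : X ≃ᵢ X)⁻¹ o)
      (fun m => (v : X ≃ᵢ X) ((e m : X ≃ᵢ X)⁻¹ o))) :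
    ¬ProperAct G := by
  set x := fun n => (a n : X ≃ᵢ X)⁻¹ o
  set y := fun m => (e m : X ≃ᵢ X)⁻¹ o
  have hx : Tendsto (fun n => dist o (x n)) atTop atTop := by
    simpa only [x, dist_inv_apply] using ha
  have hy : Tendsto (fun m => dist o (y m)) atTop atTop := by
    simpa only [y, dist_inv_apply] using he
  have hxy : Aligned o x y := by simpa using hal 1
  have hfix : ∀ v : G, Aligned o (fun m => (v : X ≃ᵢ X) (y m)) y :=
    fun v => (hal v).symm.trans hX hxy hx
  obtain ⟨C₁, h₁⟩ := hxy.exists_eventually_le hy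
  obtain ⟨C₂, h₂⟩ := (by simpa using hfix 1 : Aligned o y y).exists_eventually_le hy
  obtain ⟨C, hC⟩ := hcross
  set B := max C₁ C₂
  have hrep : ∀ g : G, (∀ᶠ m in atTop, dist o ((g : X ≃ᵢ X)⁻¹ o) - B ≤
      gprod o ((g : X ≃ᵢ X)⁻¹ o) (y m)) → IsRepellingEnd o B g y :=
    fun g hg => ⟨by simpa only [dist_inv_apply] using hg, hfix g, hfix g⁻¹⟩
  set L := max (2 * (B + 2 * δ)) (C + B + 3 * δ)
  have hxB : ∀ᶠ n in atTop, L < dist o ((a n : X ≃ᵢ X) o) ∧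
      ∀ᶠ m in atTop, dist o (x n) - B ≤ gprod o (x n) (y m) := by
    filter_upwards [ha.eventually_gt_atTop L, h₁] with n hn hn'
    exact ⟨hn, hn'.mono fun m hm => by linarith [le_max_left C₁ C₂]⟩
  have hyB : ∀ᶠ m in atTop, L < dist o ((e m : X ≃ᵢ X) o) ∧
      ∀ᶠ m' in atTop, dist o (y m) - B ≤ gprod o (y m) (y m') := by
    filter_upwards [he.eventually_gt_atTop L, h₂] with m hm hm'
    exact ⟨hm, hm'.mono fun m' hm' => by linarith [le_max_right C₁ C₂]⟩
  have hgood := hxB.prod_mk hyB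
  rw [prod_atTop_atTop_eq] at hgood
  obtain ⟨⟨n, m⟩, hnm, ⟨hn, hxn⟩, hm, hym⟩ := (hC.and hgood).exists
  have hL₁ := le_max_left (2 * (B + 2 * δ)) (C + B + 3 * δ)
  have hL₂ := le_max_right (2 * (B + 2 * δ)) (C + B + 3 * δ)
  exact not_properAct_of_isRepellingEnd hX (a n).2 (e m).2 hy (hrep _ hxn) (hrep _ hym)
    (by linarith) (by linarith) (lt_min (by linarith) (by linarith))

end GromovScaffold

theorem limit_set_duality_general
    {X : Type*} [MetricSpace X]
    (δ : ℝ) (hhyp : IsGromovHyperbolic X δ)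
    (G : Subgroup (X ≃ᵢ X)) (hproper : ProperAct G)
    (o : X) :
    ∀ ξ ∈ limitSet G o, ∀ η ∈ limitSet G o, ξ ≠ η →
      ∃ g : ℕ → G, SeqConv o (fun n => ((g n : X ≃ᵢ X)) o) ξ ∧
        SeqConv o (fun n => ((g n : X ≃ᵢ X)⁻¹) o) η := by
  rintro ξ ⟨a, ha, hξ⟩ η ⟨e, he, hη⟩ hne
  by_cases hal : ∀ v : G, Aligned o (fun n => (a n : X ≃ᵢ X)⁻¹ o)
      (fun m => (v : X ≃ᵢ X) ((e m : X ≃ᵢ X)⁻¹ o))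
  · exact absurd hproper (not_properAct_of_forall_aligned hhyp ha he
      (hξ.exists_eventually_gprod_le hhyp hη hne) hal)
  · obtain ⟨v, hv⟩ := not_forall.1 hal
    exact exists_seq_of_not_aligned hhyp hξ hη hv

/-- duality of the limit set. -/
theorem limit_set_duality
    {X : Type*} [MetricSpace X] [ProperSpace X]
    (δ : ℝ) (hδ : 0 ≤ δ) (hhyp : IsGromovHyperbolic X δ) (hgeo : GeodesicSpace X)
    (G : Subgroup (X ≃ᵢ X)) (hproper : ProperAct G)
    (o : X)
    (htwo : ∃ a b : GromovBoundary X, a ∈ limitSet G o ∧ b ∈ limitSet G o ∧ a ≠ b) :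
    ∀ ξ ∈ limitSet G o, ∀ η ∈ limitSet G o, ξ ≠ η →
      ∃ g : ℕ → G, SeqConv o (fun n => ((g n : X ≃ᵢ X)) o) ξ ∧
        SeqConv o (fun n => ((g n : X ≃ᵢ X)⁻¹) o) η :=
  limit_set_duality_general δ hhyp G hproper o
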